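/- arXiv:1104.1601 — 11 statements merged into one kernel-verified Lean document; each statement's English description precedes it below -/
import Mathlib

section
/- Factorial property of represented strings (Theorem 3.1(ii)): for any strings T, w, v over the alphabet A, if w is represented in T and v is a contiguous substring (infix) of w, then v is represented in T. -/
/-- `w` occurs in `T` at the (1-indexed) position `p`, i.e. `1 ≤ p ≤ |T| - |w| + 1`
and `T[p..p+|w|-1] = w`. -/
def OccursAt {A : Type*} (T w : List A) (p : ℕ) : Prop :=
  1 ≤ p ∧ p + w.length ≤ T.length + 1 ∧ (T.drop (p - 1)).take w.length = w

/-- `w` is represented in `T`: there are positions `p 1 < p 2 < ... < p |w|` such that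
for each `1 ≤ ℓ ≤ |w|`, the prefix `w[1..ℓ]` occurs in `T` at position `p ℓ`. -/
def Represented {A : Type*} (T w : List A) : Prop :=
  ∃ p : ℕ → ℕ,
    (∀ i j, 1 ≤ i → i < j → j ≤ w.length → p i < p j) ∧
    (∀ ℓ, 1 ≤ ℓ → ℓ ≤ w.length → OccursAt T (w.take ℓ) (p ℓ))

/-! Both halves of an infix are cut off separately. Dropping a suffix keeps the prefix
positions unchanged. Dropping a prefix `s` shifts the witness: the prefix `v[1..ℓ]` of
`s ++ v` occurs at `p (|s| + ℓ)`, so `v[1..ℓ]` occurs `|s|` places later, and the shifted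
positions `p (|s| + ℓ) + |s|` are still strictly increasing. -/

theorem OccursAt.of_append_left {A : Type*} {T s u : List A} {p : ℕ}
    (h : OccursAt T (s ++ u) p) : OccursAt T u (p + s.length) := by
  obtain ⟨hp, hlen, htake⟩ := h
  rw [List.length_append] at hlen htake
  refine ⟨by omega, by omega, ?_⟩
  calc (T.drop (p + s.length - 1)).take u.length
      = ((T.drop (p - 1)).take (s.length + u.length)).drop s.length := by
        rw [show p + s.length - 1 = p - 1 + s.length by omega, ← List.drop_drop,
          List.take_drop]
    _ = u := by rw [htake, List.drop_left]

theorem Represented.of_prefix {A : Type*} {T w u : List A} (hw : Represented T w)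
    (hu : u <+: w) : Represented T u := by
  have hlen := hu.length_le
  obtain ⟨t, rfl⟩ := hu
  obtain ⟨p, hmono, hocc⟩ := hw
  refine ⟨p, fun i j hi hij hj => hmono i j hi hij (hj.trans hlen), fun ℓ h1 h2 => ?_⟩
  rw [← List.take_append_of_le_length h2]
  exact hocc ℓ h1 (h2.trans hlen)

theorem Represented.of_append_left {A : Type*} {T s v : List A}
    (h : Represented T (s ++ v)) : Represented T v := by
  obtain ⟨p, hmono, hocc⟩ := h
  rw [List.length_append] at hmono hocc
  refine ⟨fun ℓ => p (s.length + ℓ) + s.length, fun i j hi hij hj => ?_, fun ℓ h1 h2 => ?_⟩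
  · have := hmono (s.length + i) (s.length + j) (by omega) (by omega) (by omega)
    dsimp only
    omega
  · have hocc' := hocc (s.length + ℓ) (by omega) (by omega)
    rw [List.take_length_add_append] at hocc'
    exact hocc'.of_append_left

theorem Represented.of_infix {A : Type*} {T w v : List A} (hw : Represented T w)
    (hv : v <:+: w) : Represented T v := by
  obtain ⟨s, t, rfl⟩ := hv
  exact (hw.of_prefix (List.prefix_append (s ++ v) t)).of_append_left

/-- Factorial property of represented strings (Theorem 3.1(ii)): if `w` is represented
in `T` and `v` is an infix (contiguous substring) of `w`, then `v` is represented in `T`. -/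
theorem represented_of_infix {A : Type*} (T w v : List A)
    (hw : Represented T w) (hv : v <:+: w) : Represented T v :=
  hw.of_infix hv
end

section
/- Tail-closure of represented strings (key step in the proof of Theorem 3.1(ii)): for any strings T, w over the alphabet A with w nonempty, if w is represented in T then the tail w[2..|w|] of w is represented in T. -/
/- If `a :: v` is represented via positions `p`, then `v` is represented via
`ℓ ↦ p (ℓ + 1) + 1`: the prefix `v[1..ℓ]` is `(a :: v)[1..ℓ+1]` with its first letter dropped. -/

section

variable {A : Type*}

theorem OccursAt.of_cons {T v : List A} {a : A} {p : ℕ} (h : OccursAt T (a :: v) p) :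
    OccursAt T v (p + 1) := by
  obtain ⟨hp, hlen, hocc⟩ := h
  refine ⟨by omega, by simpa [Nat.add_assoc, Nat.add_comm 1] using hlen, ?_⟩
  have := congrArg List.tail hocc
  rwa [List.tail_take_eq_take_tail, List.tail_drop, Nat.sub_add_cancel hp, List.length_cons,
    Nat.add_sub_cancel] at this

theorem represented_nil (T : List A) : Represented T [] :=
  ⟨id, fun _ _ _ hij hj => by simp only [List.length_nil] at hj; omega,
    fun _ hℓ hℓ' => by simp only [List.length_nil] at hℓ'; omega⟩

theorem Represented.of_cons {T v : List A} {a : A} (h : Represented T (a :: v)) :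
    Represented T v := by
  obtain ⟨p, hmono, hocc⟩ := h
  refine ⟨fun ℓ => p (ℓ + 1) + 1, fun i j hi hij hj => ?_, fun ℓ hℓ hℓv => ?_⟩
  · show p (i + 1) + 1 < p (j + 1) + 1
    have := hmono (i + 1) (j + 1) (by omega) (by omega) (by simpa using hj)
    omega
  · exact (hocc (ℓ + 1) (by omega) (by simpa using hℓv)).of_cons

end

theorem represented_tail_general {A : Type*} (T w : List A)
    (hw : Represented T w) : Represented T w.tail := by
  cases w with
  | nil => exact represented_nil T
  | cons a v => exact hw.of_cons

/-- Tail-closure of represented strings (key step in the proof of Theorem 3.1(ii)):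
if a nonempty `w` is represented in `T`, then its tail `w[2..|w|]` is represented in `T`. -/
theorem represented_tail {A : Type*} (T w : List A)
    (hne : w ≠ []) (hw : Represented T w) : Represented T w.tail :=
  represented_tail_general T w hw
end

section
/- Prefix frequency of represented strings (intermediate claim in the proof of Theorem 3.1(iii)): for any strings T, w over the alphabet A, if w is represented in T and 1 ≤ ℓ ≤ |w|, then the prefix w[1..ℓ] occurs in T at least |w| − ℓ + 1 times (i.e., at |w| − ℓ + 1 distinct starting positions). -/
/-!
The positions `p m` witnessing the representation of `w` are pairwise distinct, and for every
`m ≥ ℓ` the prefix `w[1..ℓ]` of `w[1..m]` also occurs at `p m`; so the `|w| - ℓ + 1` indices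
`m ∈ [ℓ, |w|]` give as many distinct occurrences of `w[1..ℓ]`.
-/

theorem OccursAt.of_prefix {A : Type*} {T u v : List A} {p : ℕ} (h : OccursAt T u p)
    (hvu : v <+: u) : OccursAt T v p := by
  obtain ⟨hp, hlen, htake⟩ := h
  refine ⟨hp, (Nat.add_le_add_left hvu.length_le p).trans hlen, ?_⟩
  calc (T.drop (p - 1)).take v.length
      = ((T.drop (p - 1)).take u.length).take v.length := by
        rw [List.take_take, min_eq_left hvu.length_le]
    _ = v := by rw [htake, ← List.prefix_iff_eq_take.mp hvu]

theorem finite_setOf_occursAt {A : Type*} (T w : List A) : {p | OccursAt T w p}.Finite :=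
  (Set.finite_Iic (T.length + 1)).subset fun _ ⟨_, hlen, _⟩ => (Nat.le_add_right _ _).trans hlen

/-- Prefix frequency of represented strings (intermediate claim in the proof of
Theorem 3.1(iii)): if `w` is represented in `T` and `1 ≤ ℓ ≤ |w|`, then the prefix
`w[1..ℓ]` occurs in `T` at at least `|w| - ℓ + 1` distinct starting positions. -/
theorem prefix_frequency {A : Type*} (T w : List A) (hw : Represented T w)
    (ℓ : ℕ) (h1 : 1 ≤ ℓ) (h2 : ℓ ≤ w.length) :
    w.length - ℓ + 1 ≤ {p : ℕ | OccursAt T (w.take ℓ) p}.ncard := by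
  obtain ⟨p, hp_lt, hp_occ⟩ := hw
  have hinj : Set.InjOn p (Set.Icc ℓ w.length) :=
    StrictMonoOn.injOn fun i hi j hj hij => hp_lt i j (h1.trans hi.1) hij hj.2
  have hmaps : ∀ m ∈ Set.Icc ℓ w.length, OccursAt T (w.take ℓ) (p m) := fun m hm =>
    (hp_occ m (h1.trans hm.1) hm.2).of_prefix (List.take_prefix_take_left hm.1)
  calc w.length - ℓ + 1 = (Set.Icc ℓ w.length).ncard := by
        rw [← Finset.coe_Icc, Set.ncard_coe_finset, Nat.card_Icc]; omega
    _ ≤ _ := Set.ncard_le_ncard_of_injOn p hmaps hinj (finite_setOf_occursAt T _)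
end

section
/- Depth bound (Theorem 3.1(iii)): for any strings T, w over the alphabet A with w nonempty, if w is represented in T then there exists a nonempty string u (namely the prefix of w of length ⌈|w|/2⌉) such that u occurs in T at least |u| times and |w| ≤ 2|u|. In particular, the length of any string represented in T is at most 2·h(T), where h(T) is the maximum length of a substring of T that occurs in T at least as many times as its length. -/
/-!
Let `n = |w|` and `m = ⌈n/2⌉`. Each prefix `w[1..ℓ]` with `m ≤ ℓ ≤ n` starts with `u = w[1..m]`,
so `u` occurs at the `n - m + 1 ≥ m` distinct positions `p m < ⋯ < p n` witnessing that `w`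
is represented in `T`.
-/

namespace OccursAt

variable {A : Type*} {T w : List A} {p : ℕ}

theorem take (h : OccursAt T w p) (k : ℕ) : OccursAt T (w.take k) p := by
  obtain ⟨hp, hlen, hw⟩ := h
  refine ⟨hp, ?_, ?_⟩
  · have := List.length_take_le' k w
    omega
  · conv_rhs => rw [← hw]
    rw [List.take_take, List.length_take, min_comm]

theorem isInfix (h : OccursAt T w p) : w <:+: T := by
  rw [← h.2.2]
  exact (List.take_prefix _ _).isInfix.trans (List.drop_suffix _ _).isInfix

end OccursAt

theorem setOf_occursAt_finite {A : Type*} (T w : List A) :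
    {p : ℕ | OccursAt T w p}.Finite :=
  (Set.finite_Icc 1 (T.length + 1)).subset fun _ ⟨hp, hlen, _⟩ => ⟨hp, by omega⟩

theorem Represented.sub_add_one_le_ncard_occursAt_take {A : Type*} {T w : List A}
    (hw : Represented T w) {m : ℕ} (hm : 0 < m) :
    w.length + 1 - m ≤ {p : ℕ | OccursAt T (w.take m) p}.ncard := by
  obtain ⟨p, hmono, hocc⟩ := hw
  have hinj : Set.InjOn p (Set.Icc m w.length) := by
    have : StrictMonoOn p (Set.Icc 1 w.length) :=
      fun i hi j hj hij => hmono i j hi.1 hij hj.2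
    exact (this.mono fun ℓ hℓ => ⟨hm.trans_le hℓ.1, hℓ.2⟩).injOn
  have hmaps : ∀ ℓ ∈ Set.Icc m w.length, OccursAt T (w.take m) (p ℓ) := by
    rintro ℓ ⟨hmℓ, hℓ⟩
    simpa [List.take_take, min_eq_left hmℓ] using
      (hocc ℓ (hm.trans_le hmℓ) hℓ).take m
  calc w.length + 1 - m = (Set.Icc m w.length).ncard := (Set.ncard_Icc_nat _ _).symm
    _ ≤ _ := Set.ncard_le_ncard_of_injOn p hmaps hinj (setOf_occursAt_finite _ _)

/-- Depth bound (Theorem 3.1(iii)): if a nonempty `w` is represented in `T`, then its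
prefix `u` of length `⌈|w|/2⌉` is nonempty, occurs in `T` at least `|u|` times, and
`|w| ≤ 2|u|`.  In particular, `|w| ≤ 2·h(T)` where `h(T)` bounds the length of every
substring of `T` occurring in `T` at least as many times as its length. -/
theorem depth_bound {A : Type*} (T w : List A)
    (hne : w ≠ []) (hw : Represented T w) :
    (∃ u : List A, u = w.take ((w.length + 1) / 2) ∧ u ≠ [] ∧
      u.length ≤ {p : ℕ | OccursAt T u p}.ncard ∧ w.length ≤ 2 * u.length) ∧
    (∀ h : ℕ,
      (∀ x : List A, x <:+: T → x.length ≤ {p : ℕ | OccursAt T x p}.ncard →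
        x.length ≤ h) →
      w.length ≤ 2 * h) := by
  have hn : 0 < w.length := List.length_pos_iff.mpr hne
  set m := (w.length + 1) / 2
  have hm : 0 < m := by omega
  have hu : (w.take m).length = m := List.length_take_of_le (by omega)
  have hcount : (w.take m).length ≤ {p : ℕ | OccursAt T (w.take m) p}.ncard := by
    have := hw.sub_add_one_le_ncard_occursAt_take hm
    omega
  refine ⟨⟨w.take m, rfl, List.ne_nil_of_length_pos (by omega), hcount, by omega⟩, ?_⟩
  intro h hh
  obtain ⟨p, -, hocc⟩ := hw
  have := hh _ (hocc m hm (by omega)).isInfix hcount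
  omega
end

section
/- Occurrence bound for non-represented strings (Theorem 3.1(iv), inverse part): for any strings T, w over the alphabet A, if w is not represented in T and w' is the longest prefix of w that is represented in T (such a prefix exists since the empty string is represented), then w occurs in T at most |w'| times. -/
lemma occursAt_take {A : Type*} {T w : List A} {p : ℕ} (h : OccursAt T w p)
    (ℓ : ℕ) (hℓ : ℓ ≤ w.length) : OccursAt T (w.take ℓ) p := by
  obtain ⟨h1, h2, h3⟩ := h
  refine ⟨h1, ?_, ?_⟩
  · simp only [List.length_take]
    omega
  · simp only [List.length_take, min_eq_left hℓ]
    rw [← h3, List.take_take, min_eq_left hℓ]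

/-- Occurrence bound for non-represented strings (Theorem 3.1(iv), inverse part):
if `w` is not represented in `T` and `w'` is the longest prefix of `w` that is
represented in `T`, then `w` occurs in `T` at most `|w'|` times. -/
theorem nonrepresented_occurrence_bound {A : Type*} (T w w' : List A)
    (hnr : ¬ Represented T w)
    (hpre : w' <+: w) (hrep : Represented T w')
    (hlongest : ∀ v : List A, v <+: w → Represented T v → v.length ≤ w'.length) :
    {p : ℕ | OccursAt T w p}.ncard ≤ w'.length := by
  set k := w'.length with hk
  -- |w'| < |w|
  have hlt : k < w.length := by
    rcases lt_or_eq_of_le hpre.length_le with h | h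
    · exact h
    · exact absurd (hpre.eq_of_length h ▸ hrep) hnr
  by_contra hcard
  push_neg at hcard
  set S : Set ℕ := {p : ℕ | OccursAt T w p} with hS
  have hfin : S.Finite := by
    apply Set.Finite.subset (Set.finite_Iic (T.length + 1))
    intro p hp
    have := hp.2.1
    simp only [Set.mem_Iic]
    omega
  have hcard' : k + 1 ≤ hfin.toFinset.card := by
    rw [← Set.ncard_eq_toFinset_card S hfin]
    omega
  obtain ⟨t, hts, htc⟩ := Finset.exists_subset_card_eq hcard'
  set e := t.orderEmbOfFin htc with he
  have hmem : ∀ i : Fin (k + 1), e i ∈ S := fun i => by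
    have := Finset.orderEmbOfFin_mem t htc i
    have := hts this
    simpa [Set.Finite.mem_toFinset] using this
  -- w.take (k+1) is represented, contradicting maximality
  have hrep' : Represented T (w.take (k + 1)) := by
    refine ⟨fun ℓ => e ⟨min (ℓ - 1) k, by omega⟩, ?_, ?_⟩
    · intro i j hi hij hj
      apply e.strictMono
      simp only [List.length_take] at hj
      simp only [Fin.mk_lt_mk]
      omega
    · intro ℓ hℓ hℓ'
      simp only [List.length_take] at hℓ'
      have hℓk : ℓ ≤ k + 1 := by omega
      rw [List.take_take, min_eq_left hℓk]
      exact occursAt_take (hmem _) ℓ (by omega)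
  have := hlongest _ (List.take_prefix _ _) hrep'
  rw [List.length_take] at this
  omega
end

section
/- Lemma 4.1 (next-secondary): let T be a string of length n over the alphabet A. If j < n is a secondary position of T, then j + 1 is also a secondary position of T. -/
/-- A position `j` with `1 ≤ j ≤ |T|` is secondary if there are positions
`p 1 < p 2 < ... < p (|T| - j + 1)`, all strictly less than `j`, such that for each
`1 ≤ ℓ ≤ |T| - j + 1`, the prefix `T[j..j+ℓ-1]` of the suffix `T[j..|T|]`
occurs in `T` at position `p ℓ`. -/
def Secondary {A : Type*} (T : List A) (j : ℕ) : Prop :=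
  1 ≤ j ∧ j ≤ T.length ∧
  ∃ p : ℕ → ℕ,
    (∀ i i', 1 ≤ i → i < i' → i' ≤ T.length - j + 1 → p i < p i') ∧
    (∀ ℓ, 1 ≤ ℓ → ℓ ≤ T.length - j + 1 →
      p ℓ < j ∧ OccursAt T ((T.drop (j - 1)).take ℓ) (p ℓ))

/-- Lemma 4.1 (next-secondary): if `j < |T|` is a secondary position of `T`, then
`j + 1` is also a secondary position of `T`. -/
theorem secondary_succ {A : Type*} (T : List A) (j : ℕ)
    (hj : Secondary T j) (hlt : j < T.length) : Secondary T (j + 1) := by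
  obtain ⟨hj1, hjn, p, hmono, hocc⟩ := hj
  refine ⟨by omega, by omega, fun ℓ => p (ℓ + 1) + 1, ?_, ?_⟩
  · intro i i' hi hii hle
    dsimp only
    have := hmono (i + 1) (i' + 1) (by omega) (by omega) (by omega)
    omega
  · intro ℓ hℓ hℓn
    dsimp only
    simp only [Nat.add_sub_cancel]
    obtain ⟨hlt', h1, h2, h3⟩ := hocc (ℓ + 1) (by omega) (by omega)
    have hlen1 : ((T.drop (j - 1)).take (ℓ + 1)).length = ℓ + 1 := by
      simp [List.length_take, List.length_drop]; omega
    have hlen2 : ((T.drop j).take ℓ).length = ℓ := by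
      simp [List.length_take, List.length_drop]; omega
    rw [hlen1] at h2 h3
    set q := p (ℓ + 1) with hq
    refine ⟨by omega, by omega, by rw [hlen2]; omega, ?_⟩
    rw [hlen2]
    have := congrArg (List.drop 1) h3
    rw [List.drop_take, List.drop_take, List.drop_drop, List.drop_drop] at this
    have e1 : q - 1 + 1 = q := by omega
    have e2 : j - 1 + 1 = j := by omega
    have e3 : q + 1 - 1 = q := by omega
    rw [e1, e2, Nat.add_sub_cancel] at this
    simpa [e3] using this
end

section
/- Primary/secondary interval splitting (consequence of Lemma 4.1): for every string T of length n over the alphabet A, there exists s with 1 ≤ s ≤ n + 1 such that for every position j with 1 ≤ j ≤ n, j is a secondary position of T if and only if j ≥ s. (Thus the positions of T split into an initial interval [1..s−1] of primary positions and a final interval [s..n] of secondary positions.) -/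
lemma secondary_step {A : Type*} (T : List A) (j : ℕ) (h : Secondary T j)
    (hj : j + 1 ≤ T.length) : Secondary T (j + 1) := by
  obtain ⟨h1, h2, p, hmono, hocc⟩ := h
  refine ⟨by omega, hj, fun ℓ => p (ℓ + 1) + 1, ?_, ?_⟩
  · intro i i' hi hii' hi'
    have := hmono (i + 1) (i' + 1) (by omega) (by omega) (by omega)
    show p (i + 1) + 1 < p (i' + 1) + 1
    omega
  · intro ℓ hℓ1 hℓ2
    obtain ⟨hlt, hp1, hp2, hp3⟩ := hocc (ℓ + 1) (by omega) (by omega)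
    have hw : ((T.drop (j - 1)).take (ℓ + 1)).length = ℓ + 1 := by
      simp [List.length_take, List.length_drop]; omega
    have hw2 : ((T.drop (j + 1 - 1)).take ℓ).length = ℓ := by
      simp [List.length_take, List.length_drop]; omega
    rw [hw] at hp2 hp3
    show p (ℓ + 1) + 1 < j + 1 ∧
      OccursAt T ((T.drop (j + 1 - 1)).take ℓ) (p (ℓ + 1) + 1)
    refine ⟨by omega, by omega, by rw [hw2]; omega, ?_⟩
    rw [hw2]
    have := congrArg (List.drop 1) hp3
    simpa [List.drop_take, List.drop_drop, Nat.sub_add_cancel h1,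
      Nat.sub_add_cancel hp1, Nat.add_comm 1] using this

/-- Primary/secondary interval splitting (consequence of Lemma 4.1): there is an
`s` with `1 ≤ s ≤ |T| + 1` such that a position `j ∈ [1..|T|]` is secondary iff `j ≥ s`. -/
theorem secondary_interval {A : Type*} (T : List A) :
    ∃ s : ℕ, 1 ≤ s ∧ s ≤ T.length + 1 ∧
      ∀ j : ℕ, 1 ≤ j → j ≤ T.length → (Secondary T j ↔ s ≤ j) := by
  classical
  by_cases h : ∃ j, Secondary T j
  · set s := Nat.find h with hsdef
    have hs : Secondary T s := Nat.find_spec h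
    have upward : ∀ j, s ≤ j → j ≤ T.length → Secondary T j := by
      intro j hsj hjn
      induction j with
      | zero => exact absurd (le_trans hs.1 hsj) (by omega)
      | succ k ih =>
        rcases eq_or_lt_of_le hsj with heq | hlt
        · rw [← heq]; exact hs
        · exact secondary_step T k (ih (by omega) (by omega)) hjn
    refine ⟨s, hs.1, by have := hs.2.1; omega, fun j _ hjn => ?_⟩
    constructor
    · intro hsec; exact Nat.find_min' h hsec
    · intro hsj; exact upward j hsj hjn
  · refine ⟨T.length + 1, by omega, le_refl _, fun j hj1 hjn => ?_⟩
    constructor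
    · intro hsec; exact absurd ⟨j, hsec⟩ h
    · intro hle; omega
end

section
/- Monotonicity of edge extension over suffixes (core of Lemma 4.2): let T be a string of length n over the alphabet A and let a ∈ A. For every i with 1 ≤ i < n, if the string T[i..n]·a (the suffix of T starting at i extended by the letter a) is represented in T, then T[i+1..n]·a is represented in T. Hence the set of positions i such that T[i..n]·a is represented in T is upward closed in [1..n]. -/
/-!
Dropping the first `k` letters of a represented string keeps it represented: shift every witness
position by `k`, since the prefix `w[1..ℓ+k]` occurring at `p` makes `w[k+1..ℓ+k]` occur at
`p + k`. Applied to `T[i..n]·a` with `k = i' - i` this gives both claims at once.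
-/

theorem OccursAt.drop {A : Type*} {T u : List A} {q k : ℕ} (hk : k ≤ u.length)
    (h : OccursAt T u q) : OccursAt T (u.drop k) (q + k) := by
  obtain ⟨hq, hlen, htake⟩ := h
  refine ⟨by omega, by simp only [List.length_drop]; omega, ?_⟩
  conv_rhs => rw [← htake]
  rw [List.drop_take, List.drop_drop, List.length_drop, Nat.sub_add_comm hq]

theorem Represented.drop {A : Type*} {T w : List A} (h : Represented T w) (k : ℕ) :
    Represented T (w.drop k) := by
  obtain ⟨p, hmono, hocc⟩ := h
  refine ⟨fun ℓ => p (ℓ + k) + k, ?_, ?_⟩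
  · intro i j hi hij hj
    rw [List.length_drop] at hj
    exact Nat.add_lt_add_right (hmono (i + k) (j + k) (by omega) (by omega) (by omega)) k
  · intro ℓ hℓ hℓw
    rw [List.length_drop] at hℓw
    have hocc' := (hocc (ℓ + k) (by omega) (by omega)).drop (k := k)
      (by rw [List.length_take]; omega)
    rwa [List.drop_take, Nat.add_sub_cancel] at hocc'

theorem represented_drop_append_of_le {A : Type*} {T u v : List A} {k : ℕ} (hk : k ≤ u.length)
    (h : Represented T (u ++ v)) : Represented T (u.drop k ++ v) := by
  simpa only [List.drop_append_of_le_length hk] using h.drop k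

/-- Monotonicity of edge extension over suffixes (core of Lemma 4.2): for `1 ≤ i < |T|`,
if `T[i..|T|]·a` is represented in `T` then so is `T[i+1..|T|]·a`.  Hence the set of
positions `i ∈ [1..|T|]` such that `T[i..|T|]·a` is represented in `T` is upward closed. -/
theorem represented_suffix_extension_mono {A : Type*} (T : List A) (a : A) :
    (∀ i : ℕ, 1 ≤ i → i < T.length →
      Represented T (T.drop (i - 1) ++ [a]) → Represented T (T.drop i ++ [a])) ∧
    (∀ i i' : ℕ, 1 ≤ i → i ≤ i' → i' ≤ T.length →
      Represented T (T.drop (i - 1) ++ [a]) → Represented T (T.drop (i' - 1) ++ [a])) := by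
  have suffix_mono : ∀ i i' : ℕ, 1 ≤ i → i ≤ i' → i' ≤ T.length →
      Represented T (T.drop (i - 1) ++ [a]) → Represented T (T.drop (i' - 1) ++ [a]) := by
    intro i i' hi hii' hi'n h
    have hshift := represented_drop_append_of_le (k := i' - i)
      (by rw [List.length_drop]; omega) h
    rwa [List.drop_drop, show i - 1 + (i' - i) = i' - 1 by omega] at hshift
  refine ⟨fun i hi hin h => ?_, suffix_mono⟩
  simpa using suffix_mono i (i + 1) hi (by omega) hin h
end

section
/- Characterization of surviving secondary positions under string extension (Lemma 4.2): let T be a string of length k+1 over the alphabet A, let a = T[k+1] be its last letter, and let T₀ = T[1..k] be the string obtained by removing the last letter. Then for every position j with 1 ≤ j ≤ k: j is a secondary position of T if and only if j is a secondary position of T₀ and the string T₀[j..k]·a is represented in T₀. -/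
lemma occ_append_iff {A : Type*} (L : List A) (a : A) (w : List A) (p : ℕ)
    (h : p + w.length ≤ L.length + 1) :
    OccursAt (L ++ [a]) w p ↔ OccursAt L w p := by
  have key : 1 ≤ p →
      ((L ++ [a]).drop (p - 1)).take w.length = (L.drop (p - 1)).take w.length := by
    intro h1
    rw [List.drop_append_of_le_length (by omega),
        List.take_append_of_le_length (by rw [List.length_drop]; omega)]
  constructor
  · rintro ⟨h1, _, h3⟩
    exact ⟨h1, h, by rw [← key h1]; exact h3⟩
  · rintro ⟨h1, _, h3⟩
    refine ⟨h1, ?_, by rw [key h1]; exact h3⟩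
    simp only [List.length_append, List.length_cons, List.length_nil]
    omega

/-- Characterization of surviving secondary positions under string extension (Lemma 4.2):
let `T` be nonempty with last letter `a`, and let `T₀` be `T` with its last letter removed
(so `|T₀| = |T| - 1 = k`).  Then for `1 ≤ j ≤ k`: `j` is a secondary position of `T` iff
`j` is a secondary position of `T₀` and `T₀[j..k]·a` is represented in `T₀`. -/
theorem secondary_extension_characterization {A : Type*} (T : List A) (hT : T ≠ [])
    (j : ℕ) (h1 : 1 ≤ j) (h2 : j ≤ T.length - 1) :
    Secondary T j ↔
      (Secondary T.dropLast j ∧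
        Represented T.dropLast (T.dropLast.drop (j - 1) ++ [T.getLast hT])) := by
  have hTa : T = T.dropLast ++ [T.getLast hT] := (List.dropLast_append_getLast hT).symm
  set T₀ := T.dropLast with hT0
  set a := T.getLast hT with ha
  set w : List A := T₀.drop (j - 1) ++ [a] with hw
  have hlen : T.length = T₀.length + 1 := by
    conv_lhs => rw [hTa]
    simp
  have hjk : j ≤ T₀.length := by omega
  have hdropT : T.drop (j - 1) = w := by
    conv_lhs => rw [hTa]
    rw [List.drop_append_of_le_length (by omega)]
  have hwlen : w.length = T₀.length - j + 2 := by
    rw [hw]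
    simp only [List.length_append, List.length_drop, List.length_cons, List.length_nil]
    omega
  have hNlen : w.length = T.length - j + 1 := by omega
  have htake : ∀ ℓ, ℓ ≤ T₀.length - j + 1 → (T₀.drop (j - 1)).take ℓ = w.take ℓ := by
    intro ℓ hℓ
    rw [hw, List.take_append_of_le_length (by rw [List.length_drop]; omega)]
  have htlen : ∀ ℓ, (w.take ℓ).length = min ℓ w.length := by
    intro ℓ; simp
  constructor
  · rintro ⟨-, -, p, hmono, hocc⟩
    have hocc' : ∀ ℓ, 1 ≤ ℓ → ℓ ≤ w.length → p ℓ < j ∧ OccursAt T₀ (w.take ℓ) (p ℓ) := by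
      intro ℓ hℓ1 hℓ2
      obtain ⟨hpj, hoc⟩ := hocc ℓ hℓ1 (by omega)
      rw [hdropT, hTa] at hoc
      refine ⟨hpj, ?_⟩
      rw [← occ_append_iff T₀ a _ (p ℓ) (by rw [htlen]; omega)]
      exact hoc
    refine ⟨⟨h1, hjk, p, ?_, ?_⟩, p, ?_, ?_⟩
    · intro i i' hi hii' hi'
      exact hmono i i' hi hii' (by omega)
    · intro ℓ hℓ1 hℓ2
      obtain ⟨hpj, hoc⟩ := hocc' ℓ hℓ1 (by omega)
      rw [htake ℓ hℓ2]
      exact ⟨hpj, hoc⟩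
    · intro i i' hi hii' hi'
      exact hmono i i' hi hii' (by omega)
    · intro ℓ hℓ1 hℓ2
      exact (hocc' ℓ hℓ1 hℓ2).2
  · rintro ⟨-, r, rmono, rocc⟩
    refine ⟨h1, by omega, r, ?_, ?_⟩
    · intro i i' hi hii' hi'
      exact rmono i i' hi hii' (by omega)
    · intro ℓ hℓ1 hℓ2
      have hoc := rocc ℓ hℓ1 (by omega)
      have hbound : r ℓ + min ℓ w.length ≤ T₀.length + 1 := by
        have := hoc.2.1
        rw [htlen] at this
        exact this
      have hrN : r w.length + w.length ≤ T₀.length + 1 := by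
        have := (rocc w.length (by omega) le_rfl).2.1
        rw [htlen] at this
        omega
      have hrj : r ℓ < j := by
        rcases eq_or_lt_of_le (show ℓ ≤ w.length by omega) with heq | hlt
        · rw [heq]; omega
        · have := rmono ℓ w.length hℓ1 hlt le_rfl
          omega
      refine ⟨hrj, ?_⟩
      rw [hdropT, hTa, occ_append_iff T₀ a _ _ (by rw [htlen]; omega)]
      exact hoc
end

section
/- Monotonicity of maximal-reach lengths: let T be a string of length n over the alphabet A and for 1 ≤ i ≤ n let m(i) be the largest ℓ with 0 ≤ ℓ ≤ n−i+1 such that T[i..i+ℓ−1] is represented in T. Then for every i with 1 ≤ i < n, m(i+1) ≥ m(i) − 1. -/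
/-- Shifting an occurrence: if `w` occurs at `p`, its tail occurs at `p + 1`. -/
lemma occursAt_tail {A : Type*} (T w : List A) (p : ℕ) (h : OccursAt T w p) (hw : 1 ≤ w.length) :
    OccursAt T (w.drop 1) (p + 1) := by
  obtain ⟨hp, hb, he⟩ := h
  refine ⟨by omega, ?_, ?_⟩
  · rw [List.length_drop]; omega
  · have hd : T.drop p = (T.drop (p - 1)).drop 1 := by
      rw [List.drop_drop]; congr 1; omega
    rw [Nat.add_sub_cancel, List.length_drop, hd, ← List.drop_take, he]

/-- Monotonicity of maximal-reach lengths: if `m i` is the largest `ℓ ≤ |T| - i + 1`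
such that `T[i..i+ℓ-1]` is represented in `T`, then `m (i+1) ≥ m i - 1` for `1 ≤ i < |T|`. -/
theorem maximal_reach_mono {A : Type*} (T : List A) (m : ℕ → ℕ)
    (hm : ∀ i : ℕ, 1 ≤ i → i ≤ T.length →
      IsGreatest {ℓ : ℕ | ℓ ≤ T.length - i + 1 ∧ Represented T ((T.drop (i - 1)).take ℓ)}
        (m i))
    (i : ℕ) (h1 : 1 ≤ i) (h2 : i < T.length) : m i ≤ m (i + 1) + 1 := by
  obtain ⟨⟨hle, hrep⟩, -⟩ := hm i h1 h2.le
  obtain ⟨-, hub⟩ := hm (i + 1) (by omega) h2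
  rcases Nat.eq_zero_or_pos (m i) with h0 | h0
  · omega
  suffices h : m i - 1 ∈ {ℓ : ℕ | ℓ ≤ T.length - (i + 1) + 1 ∧
      Represented T ((T.drop (i + 1 - 1)).take ℓ)} by
    have := hub h; omega
  refine ⟨by omega, ?_⟩
  obtain ⟨p, hmono, hocc⟩ := hrep
  have hlen : ((T.drop (i - 1)).take (m i)).length = m i := by
    rw [List.length_take, List.length_drop]; omega
  have hlen' : ((T.drop (i + 1 - 1)).take (m i - 1)).length = m i - 1 := by
    rw [List.length_take, List.length_drop]; omega
  refine ⟨fun j => p (j + 1) + 1, ?_, ?_⟩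
  · intro a b ha hab hb
    rw [hlen'] at hb
    have := hmono (a + 1) (b + 1) (by omega) (by omega) (by rw [hlen]; omega)
    simp only
    omega
  · intro ℓ hℓ1 hℓ2
    rw [hlen'] at hℓ2
    have hocc' := hocc (ℓ + 1) (by omega) (by rw [hlen]; omega)
    have := occursAt_tail T ((T.drop (i - 1)).take (m i) |>.take (ℓ + 1)) (p (ℓ + 1)) hocc'
      (by rw [List.length_take, hlen]; omega)
    have heq : (((T.drop (i - 1)).take (m i)).take (ℓ + 1)).drop 1
        = ((T.drop (i + 1 - 1)).take (m i - 1)).take ℓ := by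
      rw [List.take_take, List.take_take, List.drop_take, List.drop_drop]
      congr 1 <;> first | omega | (congr 1; omega)
    rwa [heq] at this
end

section
/- Rank/select recovery from the unary difference encoding (final Lemma of the paper, combinatorial core): let n ≥ 1 and let v_1, ..., v_n be natural numbers satisfying v_i ≥ v_{i−1} − 1 for all 2 ≤ i ≤ n. Set u_1 = v_1 and u_i = v_i − v_{i−1} + 1 for 2 ≤ i ≤ n, and let B be the Boolean sequence obtained by concatenating, for i = 1, ..., n, a block of u_i ones followed by a single zero. Then for every i with 1 ≤ i ≤ n, the number of ones in B occurring before the i-th zero equals v_i + i − 1; equivalently, v_i = rank_1(B, select_0(B, i)) − i + 1, where select_0(B, i) is the position of the i-th zero of B and rank_1(B, p) is the number of ones among the first p entries of B. -/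
/-- `rank₁(B, p)`: the number of ones (`true`s) among the first `p` entries of `B`. -/
def rank1 (B : List Bool) (p : ℕ) : ℕ := (B.take p).count true

/-- `select₀(B, i)`: the (1-indexed) position of the `i`-th zero (`false`) of `B`. -/
def select0 (B : List Bool) (i : ℕ) : ℕ :=
  (((List.range B.length).filter fun p => B.getD p true = false).getD (i - 1) 0) + 1

def mkB (L : List ℕ) : List Bool := (L.map fun u => List.replicate u true ++ [false]).flatten

def zpos (B : List Bool) : List ℕ :=
  (List.range B.length).filter fun p => B.getD p true = false

lemma getD_block_lt {u : ℕ} {C : List Bool} {p : ℕ} (h : p < u) :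
    (List.replicate u true ++ false :: C)[p]?.getD true = true := by
  rw [List.getElem?_append_left (by simpa using h), List.getElem?_replicate, if_pos h]; rfl

lemma getD_block_eq {u : ℕ} {C : List Bool} :
    (List.replicate u true ++ false :: C)[u]?.getD true = false := by
  rw [List.getElem?_append_right (by simp)]
  simp

lemma getD_block_gt {u : ℕ} {C : List Bool} (p : ℕ) :
    (List.replicate u true ++ false :: C)[u + 1 + p]?.getD true = C[p]?.getD true := by
  rw [List.getElem?_append_right (by simp; omega), List.length_replicate]
  have h : u + 1 + p - u = p + 1 := by omega
  rw [h, List.getElem?_cons_succ]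

lemma zpos_block (u : ℕ) (C : List Bool) :
    zpos (List.replicate u true ++ false :: C) = u :: (zpos C).map (· + (u + 1)) := by
  unfold zpos
  have hlen : (List.replicate u true ++ false :: C).length = (u + 1) + C.length := by
    simp [List.length_replicate]; omega
  rw [hlen, List.range_add, List.filter_append, List.filter_map]
  have h1 : (List.range (u+1)).filter
      (fun p => decide ((List.replicate u true ++ false :: C).getD p true = false)) = [u] := by
    rw [List.range_add, List.filter_append]
    have h0 : (List.range u).filter
        (fun p => decide ((List.replicate u true ++ false :: C).getD p true = false)) = [] := by
      rw [List.filter_eq_nil_iff]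
      intro a ha
      simp [List.getD_eq_getElem?_getD, getD_block_lt (C := C) (List.mem_range.mp ha)]
    rw [h0]
    have hm : List.map (fun x => u + x) (List.range 1) = [u] := rfl
    rw [hm, List.filter_cons]
    have hg := getD_block_eq (u := u) (C := C)
    rw [List.getElem?_eq_getElem (by simp)] at hg
    simp at hg
    simp [hg]
  rw [h1]
  simp only [List.cons_append, List.nil_append, List.cons.injEq, true_and]
  have h2 : ∀ l : List ℕ, List.map (fun x => u + 1 + x) l = List.map (· + (u + 1)) l := by
    intro l; apply List.map_congr_left; intro a _; omega
  rw [h2]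
  congr 1
  apply List.filter_congr
  intro p hp
  simp only [Function.comp, List.getD_eq_getElem?_getD]
  rw [getD_block_gt]

lemma mkB_cons (u : ℕ) (L : List ℕ) :
    mkB (u :: L) = List.replicate u true ++ false :: mkB L := by
  simp [mkB]

lemma zpos_mkB_length (L : List ℕ) : (zpos (mkB L)).length = L.length := by
  induction L with
  | nil => rfl
  | cons u L ih => rw [mkB_cons, zpos_block]; simp [ih]

lemma zpos_mkB_getD (L : List ℕ) : ∀ i, i < L.length →
    (zpos (mkB L)).getD i 0 = (L.take (i + 1)).sum + i := by
  induction L with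
  | nil => intro i h; simp at h
  | cons u L ih =>
    intro i h
    rw [mkB_cons, zpos_block]
    cases i with
    | zero => simp
    | succ i =>
      have hi : i < L.length := by simpa using h
      have hlen : i < ((zpos (mkB L)).map (· + (u + 1))).length := by
        simp [zpos_mkB_length]; exact hi
      rw [List.getD_cons_succ, List.getD_eq_getElem _ _ hlen, List.getElem_map,
        ← List.getD_eq_getElem _ 0 (by simpa [zpos_mkB_length] using hi), ih i hi]
      simp [List.take_succ_cons, List.sum_cons]
      omega

lemma count_mkB (L : List ℕ) : (mkB L).count true = L.sum := by
  induction L with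
  | nil => rfl
  | cons u L ih => rw [mkB_cons]; simp [List.count_cons, ih]

lemma mkB_length (L : List ℕ) : (mkB L).length = L.sum + L.length := by
  induction L with
  | nil => rfl
  | cons u L ih => rw [mkB_cons]; simp [ih]; omega

lemma mkB_append (L M : List ℕ) : mkB (L ++ M) = mkB L ++ mkB M := by
  simp [mkB]

lemma rank1_mkB (L : List ℕ) (i : ℕ) :
    rank1 (mkB L) ((L.take i).sum + i) = (L.take i).sum := by
  by_cases h : i ≤ L.length
  · have hsplit : mkB L = mkB (L.take i) ++ mkB (L.drop i) := by
      rw [← mkB_append, List.take_append_drop]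
    have hlen : (mkB (L.take i)).length = (L.take i).sum + i := by
      rw [mkB_length, List.length_take, min_eq_left h]
    rw [rank1, hsplit, ← hlen, List.take_left, count_mkB]
  · push_neg at h
    have ht : L.take i = L := List.take_of_length_le (le_of_lt h)
    rw [rank1, ht, List.take_of_length_le, count_mkB]
    rw [mkB_length]; omega

/-- Rank/select recovery from the unary difference encoding: let `v 1, ..., v n`
(`n ≥ 1`) satisfy `v i ≥ v (i-1) - 1` for `2 ≤ i ≤ n`.  Set `u 1 = v 1` and
`u i = v i - v (i-1) + 1` for `2 ≤ i ≤ n`, and let `B` be the concatenation, for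
`i = 1, ..., n`, of a block of `u i` ones followed by a single zero.  Then for every
`1 ≤ i ≤ n`, the number of ones of `B` occurring before the `i`-th zero equals
`v i + i - 1`; that is, `v i = rank₁(B, select₀(B, i)) - i + 1`. -/
theorem rank_select_recovery (n : ℕ) (hn : 1 ≤ n) (v : ℕ → ℕ)
    (hv : ∀ i : ℕ, 2 ≤ i → i ≤ n → v (i - 1) ≤ v i + 1)
    (B : List Bool)
    (hB : B = ((List.range n).map fun k =>
      List.replicate (if k = 0 then v 1 else v (k + 1) + 1 - v k) true ++ [false]).flatten)
    (i : ℕ) (h1 : 1 ≤ i) (h2 : i ≤ n) :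
    rank1 B (select0 B i) = v i + i - 1 := by
  set f : ℕ → ℕ := fun k => if k = 0 then v 1 else v (k + 1) + 1 - v k with hf
  set L : List ℕ := (List.range n).map f with hL
  have hBL : B = mkB L := by
    rw [hB, hL, mkB, List.map_map]; rfl
  have hLlen : L.length = n := by simp [hL]
  have hLget : ∀ k, (hk : k < n) → L[k]'(by rw [hLlen]; exact hk) = f k := by
    intro k hk; simp [hL]
  -- sum of first i blocks
  have hsum : ∀ j, 1 ≤ j → j ≤ n → (L.take j).sum = v j + (j - 1) := by
    intro j hj1 hj2
    induction j with
    | zero => omega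
    | succ j ih =>
      cases Nat.eq_or_lt_of_le hj1 with
      | inl h =>
        have : j = 0 := by omega
        subst this
        rw [List.sum_take_succ _ _ (by rw [hLlen]; omega), List.take_zero, List.sum_nil,
          hLget 0 (by omega)]
        simp [hf]
      | inr h =>
        have hj : 1 ≤ j := by omega
        have hjn : j ≤ n := by omega
        rw [List.sum_take_succ _ _ (by rw [hLlen]; omega), ih hj hjn,
          hLget j (by omega)]
        have hfj : f j = v (j + 1) + 1 - v j := by
          simp [hf]; intro h0; omega
        have hvle : v j ≤ v (j + 1) + 1 := by
          have := hv (j + 1) (by omega) (by omega)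
          simpa using this
        rw [hfj]; omega
  have hselect : select0 B i = (L.take i).sum + i := by
    rw [select0, hBL]
    have : ((List.range (mkB L).length).filter fun p => (mkB L).getD p true = false)
        = zpos (mkB L) := rfl
    rw [this, zpos_mkB_getD L (i - 1) (by rw [hLlen]; omega)]
    have : i - 1 + 1 = i := by omega
    rw [this]; omega
  rw [hselect, hBL, rank1_mkB, hsum i h1 h2]
  omega
end
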